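/- arXiv:1701.06881 — 3 statements merged into one kernel-verified Lean document; each statement's English description precedes it below -/
import Mathlib

section
/- For λ ∈ (0,1) and s with 0 < Re(s) < (1−λ)/λ, the degenerate gamma function satisfies Γ_λ(s+1) = (s/(1−λ)^(s+1)) · Γ_{λ/(1−λ)}(s). -/
open MeasureTheory Set

/-- The degenerate gamma function `Γ_λ(s) = ∫₀^∞ (1+λt)^(−1/λ) t^(s−1) dt`. -/
noncomputable def degGamma (l : ℝ) (s : ℂ) : ℂ :=
  ∫ t in Ioi (0 : ℝ), (((1 + l * t) ^ (-(1 / l)) : ℝ) : ℂ) * (t : ℂ) ^ (s - 1)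

/-!
The substitutions `u = λ t` and `u = x / (1 - x)` turn `Γ_λ` into a Beta integral:
`Γ_λ(s) = λ^(-s) B(s, 1/λ - s)`. With `μ = λ / (1 - λ)` one has `1/μ = 1/λ - 1`, so
`Γ_λ(s + 1)` and `Γ_μ(s)` involve `B(s + 1, w)` and `B(s, w)` for the same `w = 1/λ - 1 - s`,
and these differ by the factor `s / (s + w)` from `Γ(s + 1) = s Γ(s)`.
-/

open Complex

lemma image_div_one_sub_Ioo : (fun x : ℝ => x / (1 - x)) '' Ioo 0 1 = Ioi 0 := by
  ext y
  constructor
  · rintro ⟨x, ⟨hx0, hx1⟩, rfl⟩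
    exact div_pos hx0 (sub_pos.mpr hx1)
  · intro (hy : 0 < y)
    refine ⟨y / (1 + y), ⟨by positivity, (div_lt_one (by positivity)).mpr (by linarith)⟩, ?_⟩
    field_simp
    ring

lemma hasDerivAt_div_one_sub {x : ℝ} (hx : x ≠ 1) :
    HasDerivAt (fun x : ℝ => x / (1 - x)) ((1 - x) ^ 2)⁻¹ x := by
  have hx' : 1 - x ≠ 0 := sub_ne_zero.mpr hx.symm
  refine ((hasDerivAt_id' x).div ((hasDerivAt_const x 1).sub (hasDerivAt_id' x)) hx').congr_deriv ?_
  simp only [Pi.sub_apply]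
  field_simp
  ring

lemma injOn_div_one_sub : InjOn (fun x : ℝ => x / (1 - x)) (Iio 1) := by
  intro a (ha : a < 1) b (hb : b < 1) hab
  have ha' : 1 - a ≠ 0 := by linarith
  have hb' : 1 - b ≠ 0 := by linarith
  field_simp at hab
  linarith

lemma inv_one_sub_sq_smul_cpow_div_one_sub {x : ℝ} (hx : x ∈ Ioo 0 1) (s w : ℂ) :
    ((1 - x) ^ 2)⁻¹ • (((x / (1 - x) : ℝ) : ℂ) ^ (s - 1) * (1 + ((x / (1 - x) : ℝ) : ℂ)) ^ (-w)) =
      (x : ℂ) ^ (s - 1) * (1 - (x : ℂ)) ^ (w - s - 1) := by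
  obtain ⟨hx0, hx1⟩ := hx
  have hy0 : 0 < 1 - x := sub_pos.mpr hx1
  have hyC : ((1 - x : ℝ) : ℂ) ≠ 0 := ofReal_ne_zero.mpr hy0.ne'
  have hone_add : 1 + ((x / (1 - x) : ℝ) : ℂ) = ((1 - x : ℝ) : ℂ)⁻¹ := by
    rw [← ofReal_one, ← ofReal_add, ← ofReal_inv]
    congr 1
    field_simp
    ring
  have hsplit : ((1 - x : ℝ) : ℂ) ^ w =
      ((1 - x : ℝ) : ℂ) ^ (s - 1) * ((1 - x : ℝ) : ℂ) ^ (2 : ℕ) * ((1 - x : ℝ) : ℂ) ^ (w - s - 1) := by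
    rw [← cpow_natCast, ← cpow_add _ _ hyC, ← cpow_add _ _ hyC]
    congr 1
    push_cast
    ring
  have hne : ((1 - x : ℝ) : ℂ) ^ (s - 1) ≠ 0 := cpow_ne_zero_iff.mpr (Or.inl hyC)
  rw [show (1 - (x : ℂ)) = ((1 - x : ℝ) : ℂ) by push_cast; ring, hone_add,
    inv_cpow_ofReal_nonneg hy0.le, cpow_neg, inv_inv, ofReal_div,
    div_cpow_ofReal_nonneg hx0.le hy0.le, hsplit, real_smul, ofReal_inv, ofReal_pow]
  field_simp

theorem integral_Ioi_cpow_mul_one_add_cpow_neg (s w : ℂ) :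
    ∫ u in Ioi (0 : ℝ), (u : ℂ) ^ (s - 1) * (1 + (u : ℂ)) ^ (-w) = betaIntegral s (w - s) := by
  have hderiv : ∀ x ∈ Ioo (0 : ℝ) 1,
      HasDerivWithinAt (fun x : ℝ => x / (1 - x)) ((1 - x) ^ 2)⁻¹ (Ioo 0 1) x :=
    fun x hx => (hasDerivAt_div_one_sub hx.2.ne).hasDerivWithinAt
  rw [← image_div_one_sub_Ioo, integral_image_eq_integral_abs_deriv_smul measurableSet_Ioo hderiv
    (injOn_div_one_sub.mono Ioo_subset_Iio_self), betaIntegral,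
    intervalIntegral.integral_of_le zero_le_one, integral_Ioc_eq_integral_Ioo]
  refine setIntegral_congr_fun measurableSet_Ioo fun x hx => ?_
  rw [abs_of_pos (inv_pos.mpr (pow_pos (sub_pos.mpr hx.2) 2)), inv_one_sub_sq_smul_cpow_div_one_sub hx]

theorem degGamma_eq_cpow_mul_betaIntegral {l : ℝ} (hl : 0 < l) (s : ℂ) :
    degGamma l s = (l : ℂ) ^ (-s) * betaIntegral s (1 / l - s) := by
  have hlC : (l : ℂ) ≠ 0 := ofReal_ne_zero.mpr hl.ne'
  have hintegrand : ∀ t ∈ Ioi (0 : ℝ), (((1 + l * t) ^ (-(1 / l)) : ℝ) : ℂ) * (t : ℂ) ^ (s - 1) =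
      (l : ℂ) ^ (1 - s) * (((l * t : ℝ) : ℂ) ^ (s - 1) * (1 + ((l * t : ℝ) : ℂ)) ^ (-(1 / l : ℂ))) := by
    intro t (ht : 0 < t)
    have hcancel : (l : ℂ) ^ (1 - s) * (l : ℂ) ^ (s - 1) = 1 := by
      rw [← cpow_add _ _ hlC, sub_add_sub_cancel', sub_self, cpow_zero]
    rw [ofReal_cpow (by positivity), ofReal_mul, mul_cpow_ofReal_nonneg hl.le ht.le]
    push_cast
    linear_combination (-((t : ℂ) ^ (s - 1) * (1 + l * t : ℂ) ^ (-(1 / l : ℂ)))) * hcancel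
  rw [degGamma, setIntegral_congr_fun measurableSet_Ioi hintegrand, integral_const_mul,
    integral_comp_mul_left_Ioi (fun u : ℝ => (u : ℂ) ^ (s - 1) * (1 + (u : ℂ)) ^ (-(1 / l : ℂ))) 0 hl,
    mul_zero, integral_Ioi_cpow_mul_one_add_cpow_neg, real_smul, ← mul_assoc, ofReal_inv,
    ← cpow_neg_one, ← cpow_add _ _ hlC]
  ring_nf

theorem betaIntegral_add_one_left {u v : ℂ} (hu : 0 < u.re) (hv : 0 < v.re) :
    betaIntegral (u + 1) v = u / (u + v) * betaIntegral u v := by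
  have huv : 0 < (u + v).re := by rw [add_re]; positivity
  rw [betaIntegral_eq_Gamma_mul_div _ _ (by rw [add_re, one_re]; positivity) hv,
    betaIntegral_eq_Gamma_mul_div _ _ hu hv, add_right_comm, Gamma_add_one _ (ne_zero_of_re_pos hu),
    Gamma_add_one _ (ne_zero_of_re_pos huv)]
  field_simp [Gamma_ne_zero_of_re_pos huv, ne_zero_of_re_pos huv]

theorem degGamma_succ (l : ℝ) (hl : l ∈ Ioo (0 : ℝ) 1) (s : ℂ)
    (h0 : 0 < s.re) (h1 : s.re < (1 - l) / l) :
    degGamma l (s + 1) =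
      s / ((1 - l : ℂ) ^ (s + 1)) * degGamma (l / (1 - l)) s := by
  obtain ⟨hl0, hl1⟩ := hl
  have h1l : 0 < 1 - l := sub_pos.mpr hl1
  have hlC : (l : ℂ) ≠ 0 := ofReal_ne_zero.mpr hl0.ne'
  have h1lC : ((1 - l : ℝ) : ℂ) ≠ 0 := ofReal_ne_zero.mpr h1l.ne'
  set w : ℂ := 1 / l - (s + 1) with hw
  have hw_re : 0 < w.re := by
    have : (1 - l) / l = 1 / l - 1 := by field_simp
    simp only [hw, sub_re, add_re, one_re, div_ofReal_re]
    linarith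
  have hμ : 1 / ((l / (1 - l) : ℝ) : ℂ) - s = w := by
    rw [hw]; push_cast; field_simp; ring
  have hsw : s + w = ((1 - l : ℝ) : ℂ) / l := by
    rw [hw]; push_cast; field_simp; ring
  rw [degGamma_eq_cpow_mul_betaIntegral hl0, degGamma_eq_cpow_mul_betaIntegral (div_pos hl0 h1l), hμ,
    ← hw, betaIntegral_add_one_left h0 hw_re, hsw, ofReal_div, div_cpow_ofReal_nonneg hl0.le h1l.le,
    show (1 - l : ℂ) = ((1 - l : ℝ) : ℂ) by push_cast; rfl, neg_add, cpow_add _ _ hlC,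
    cpow_add _ _ h1lC]
  simp only [cpow_neg, cpow_one]
  have hls : (l : ℂ) ^ s ≠ 0 := cpow_ne_zero_iff.mpr (Or.inl hlC)
  have h1ls : ((1 - l : ℝ) : ℂ) ^ s ≠ 0 := cpow_ne_zero_iff.mpr (Or.inl h1lC)
  field_simp
end

section
/- For λ > 0, a ∈ ℝ, and s > λ − a, the degenerate Laplace transform of (1+λt)^(−a/λ) is 1/(s+a−λ). -/
/-!
The two kernels multiply to `(1 + λt) ^ (-(s + a) / λ)`, which has the explicit antiderivative
`(1 + λt) ^ (1 - (s + a) / λ) / (λ - s - a)`; for `s > λ - a` the exponent is negative, so the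
antiderivative vanishes at infinity and the integral is minus its value at `0`.
-/

open MeasureTheory Set Filter Topology

section OneAddMulRpow

variable {l r : ℝ}

lemma hasDerivAt_one_add_mul_rpow_div (hlr : l * (r + 1) ≠ 0) {t : ℝ} (ht : 0 < 1 + l * t) :
    HasDerivAt (fun x : ℝ => (1 + l * x) ^ (r + 1) / (l * (r + 1))) ((1 + l * t) ^ r) t := by
  have hinner : HasDerivAt (fun x : ℝ => 1 + l * x) l t := by
    simpa using ((hasDerivAt_id t).const_mul l).const_add 1
  refine (((Real.hasDerivAt_rpow_const (p := r + 1) (Or.inl ht.ne')).comp t hinner).div_const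
    (l * (r + 1))).congr_deriv ?_
  rw [add_sub_cancel_right, mul_right_comm, mul_comm (r + 1) l]
  exact mul_div_cancel_left₀ _ hlr

lemma tendsto_one_add_mul_rpow_atTop (hl : 0 < l) (hr : r < 0) :
    Tendsto (fun x : ℝ => (1 + l * x) ^ r) atTop (𝓝 0) := by
  have hbase : Tendsto (fun x : ℝ => 1 + l * x) atTop atTop :=
    tendsto_atTop_add_const_left _ 1 (tendsto_id.const_mul_atTop hl)
  simpa only [neg_neg, Function.comp_def] using
    (tendsto_rpow_neg_atTop (y := -r) (by linarith)).comp hbase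

theorem integral_Ioi_one_add_mul_rpow (hl : 0 < l) (hr : r < -1) :
    ∫ t in Ioi (0 : ℝ), (1 + l * t) ^ r = -1 / (l * (r + 1)) := by
  have hpos : ∀ t ∈ Ici (0 : ℝ), 0 < 1 + l * t := fun t ht => by
    have := mul_nonneg hl.le (mem_Ici.mp ht)
    linarith
  have hlim := (tendsto_one_add_mul_rpow_atTop hl (by linarith : r + 1 < 0)).div_const
    (l * (r + 1))
  rw [zero_div] at hlim
  have hlr : l * (r + 1) ≠ 0 := mul_ne_zero hl.ne' (by linarith)
  rw [integral_Ioi_of_hasDerivAt_of_nonneg'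
    (fun t ht => hasDerivAt_one_add_mul_rpow_div hlr (hpos t ht))
    (fun t ht => (Real.rpow_pos_of_pos (hpos t (Ioi_subset_Ici_self ht)) r).le) hlim]
  simp [neg_div]

end OneAddMulRpow

theorem degLaplace_degExp (l s a : ℝ) (hl : 0 < l) (hs : l - a < s) :
    ∫ t in Ioi (0 : ℝ), (1 + l * t) ^ (-(s / l)) * (1 + l * t) ^ (-(a / l)) =
      1 / (s + a - l) := by
  have hexp : -((s + a) / l) < -1 := by
    rw [neg_lt_neg_iff, one_lt_div hl]
    linarith
  have hmul : ∀ t ∈ Ioi (0 : ℝ),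
      (1 + l * t) ^ (-(s / l)) * (1 + l * t) ^ (-(a / l)) = (1 + l * t) ^ (-((s + a) / l)) :=
    fun t ht => by
      rw [← Real.rpow_add (by nlinarith [mem_Ioi.mp ht])]
      ring_nf
  rw [setIntegral_congr_fun measurableSet_Ioi hmul, integral_Ioi_one_add_mul_rpow hl hexp,
    show l * (-((s + a) / l) + 1) = -(s + a - l) by field_simp; ring, div_neg, neg_div, neg_neg]
end

section
/- For λ > 0, a ∈ ℝ, and s > λ + |a|, the degenerate Laplace transform of sinh_λ(at) = ((1+λt)^(a/λ) − (1+λt)^(−a/λ))/2 equals a/((s−λ)² − a²). -/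
open MeasureTheory Set

lemma aux_shift (c : ℝ) (hc : c < -1) :
    IntegrableOn (fun u : ℝ => (1 + u) ^ c) (Ioi (0 : ℝ)) ∧
      ∫ u in Ioi (0 : ℝ), (1 + u) ^ c = -1 / (c + 1) := by
  have emb : MeasurableEmbedding ((1 : ℝ) + ·) := measurableEmbedding_addLeft 1
  have mp : MeasurePreserving ((1 : ℝ) + ·) volume volume :=
    measurePreserving_add_left volume 1
  have hpre : ((1 : ℝ) + ·) ⁻¹' Ioi (1 : ℝ) = Ioi (0 : ℝ) := by
    ext x; simp [mem_Ioi]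
  have hInt : IntegrableOn (fun u : ℝ => u ^ c) (Ioi (1 : ℝ)) :=
    integrableOn_Ioi_rpow_of_lt hc one_pos
  have hIval : ∫ u in Ioi (1 : ℝ), u ^ c = -1 / (c + 1) := by
    rw [integral_Ioi_rpow_of_lt hc one_pos, Real.one_rpow]
  constructor
  · have := (mp.integrableOn_comp_preimage emb (s := Ioi (1 : ℝ))).mpr hInt
    rwa [hpre] at this
  · have := mp.setIntegral_preimage_emb emb (fun u : ℝ => u ^ c) (Ioi (1 : ℝ))
    rw [hpre] at this
    rw [this, hIval]

lemma aux_int (l c : ℝ) (hl : 0 < l) (hc : c < -1) :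
    IntegrableOn (fun t : ℝ => (1 + l * t) ^ c) (Ioi (0 : ℝ)) ∧
      ∫ t in Ioi (0 : ℝ), (1 + l * t) ^ c = -1 / (l * (c + 1)) := by
  obtain ⟨h1, h2⟩ := aux_shift c hc
  constructor
  · have := (integrableOn_Ioi_comp_mul_left_iff (fun u : ℝ => (1 + u) ^ c) 0 hl).mpr
      (by rwa [mul_zero])
    exact this
  · have := integral_comp_mul_left_Ioi (fun u : ℝ => (1 + u) ^ c) 0 hl
    rw [mul_zero] at this
    rw [this, h2, smul_eq_mul]
    field_simp

theorem degLaplace_degSinh (l s a : ℝ) (hl : 0 < l) (hs : l + |a| < s) :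
    ∫ t in Ioi (0 : ℝ),
        (1 + l * t) ^ (-(s / l)) *
          (((1 + l * t) ^ (a / l) - (1 + l * t) ^ (-(a / l))) / 2) =
      a / ((s - l) ^ 2 - a ^ 2) := by
  have ha1 : a ≤ |a| := le_abs_self a
  have ha2 : -a ≤ |a| := neg_le_abs a
  have hsla : 0 < s - l - a := by linarith
  have hsla' : 0 < s - l + a := by linarith
  set c1 : ℝ := (a - s) / l with hc1def
  set c2 : ℝ := (-a - s) / l with hc2def
  have hc1 : c1 < -1 := by
    rw [hc1def, div_lt_iff₀ hl]; linarith
  have hc2 : c2 < -1 := by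
    rw [hc2def, div_lt_iff₀ hl]; linarith
  obtain ⟨i1, v1⟩ := aux_int l c1 hl hc1
  obtain ⟨i2, v2⟩ := aux_int l c2 hl hc2
  have hcong : ∀ t ∈ Ioi (0 : ℝ),
      (1 + l * t) ^ (-(s / l)) *
          (((1 + l * t) ^ (a / l) - (1 + l * t) ^ (-(a / l))) / 2) =
        ((1 + l * t) ^ c1 - (1 + l * t) ^ c2) / 2 := by
    intro t ht
    have hpos : (0 : ℝ) < 1 + l * t := by
      have : 0 < l * t := mul_pos hl ht
      linarith
    have e1 : (1 + l * t) ^ (-(s / l)) * (1 + l * t) ^ (a / l) = (1 + l * t) ^ c1 := by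
      rw [← Real.rpow_add hpos, hc1def]
      congr 1
      field_simp
      ring
    have e2 : (1 + l * t) ^ (-(s / l)) * (1 + l * t) ^ (-(a / l)) = (1 + l * t) ^ c2 := by
      rw [← Real.rpow_add hpos, hc2def]
      congr 1
      field_simp
      ring
    rw [← mul_div_assoc, mul_sub, e1, e2]
  rw [setIntegral_congr_fun measurableSet_Ioi hcong]
  rw [integral_div, integral_sub i1 i2, v1, v2]
  have h1 : l * (c1 + 1) = -(s - l - a) := by
    rw [hc1def]; field_simp; ring
  have h2 : l * (c2 + 1) = -(s - l + a) := by
    rw [hc2def]; field_simp; ring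
  rw [h1, h2]
  have hne1 : s - l - a ≠ 0 := ne_of_gt hsla
  have hne2 : s - l + a ≠ 0 := ne_of_gt hsla'
  have hden : (s - l) ^ 2 - a ^ 2 ≠ 0 := by
    have : (s - l) ^ 2 - a ^ 2 = (s - l - a) * (s - l + a) := by ring
    rw [this]
    exact mul_ne_zero hne1 hne2
  rw [neg_div_neg_eq, neg_div_neg_eq, div_sub_div _ _ hne1 hne2, div_div,
    div_eq_div_iff (mul_ne_zero (mul_ne_zero hne1 hne2) two_ne_zero) hden]
  ring
end
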